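/- There exists exactly one sequence K = (K_n)_{n≥1} taking values in {1,2} such that K_1 = 1 and the sequence of run lengths of K (where a run is a maximal block of consecutive equal symbols) is equal to K itself. -/
import Mathlib


/-- Sum of the first `m` letters of `K` (indices `0, …, m-1`), i.e. `K₁ + ⋯ + K_m`
in the paper's 1-indexed notation. -/
def psum (K : ℕ → ℕ) (m : ℕ) : ℕ := ∑ i ∈ Finset.range m, K i

/-- `K` equals the sequence of its own run lengths: the `m`-th run of `K` occupies
exactly the positions in `[psum K m, psum K (m+1))` (hence has length `K m`);
`K` is constant on each such block, and consecutive blocks carry different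
symbols (which is exactly maximality of the runs). -/
def IsRunSelf (K : ℕ → ℕ) : Prop :=
  ∀ m : ℕ,
    (∀ i : ℕ, psum K m ≤ i → i < psum K (m + 1) → K i = K (psum K m)) ∧
    K (psum K m) ≠ K (psum K (m + 1))

/-- The classical Kolakoski sequence, 0-indexed: `K i` is the letter `K_{i+1}` of
the paper.  It takes values in `{1, 2}`, starts with `1`, and equals the
sequence of its own run lengths. -/
def IsKolakoski (K : ℕ → ℕ) : Prop :=
  (∀ n, K n = 1 ∨ K n = 2) ∧ K 0 = 1 ∧ IsRunSelf K

namespace Kola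

lemma psum_zero (K : ℕ → ℕ) : psum K 0 = 0 := rfl

lemma psum_succ (K : ℕ → ℕ) (m : ℕ) : psum K (m + 1) = psum K m + K m :=
  Finset.sum_range_succ K m

/-- Finite approximations to the Kolakoski sequence: `g m` is the concatenation
of the blocks `0, …, m+1`. -/
def g : ℕ → List ℕ
  | 0 => [1, 2, 2]
  | m + 1 => g m ++ List.replicate ((g m).getD (m + 2) 0) (1 + (m + 2) % 2)

/-- The candidate Kolakoski sequence. -/
def kk (n : ℕ) : ℕ := (g n).getD n 0

lemma g_prefix_le {m m' : ℕ} (h : m ≤ m') : g m <+: g m' := by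
  induction m' with
  | zero =>
    cases Nat.le_zero.mp h
    exact List.prefix_refl _
  | succ k ih =>
    rcases Nat.lt_or_ge m (k + 1) with h' | h'
    · exact (ih (Nat.lt_succ_iff.mp h')).trans ⟨_, rfl⟩
    · have : m = k + 1 := le_antisymm h h'
      subst this
      exact List.prefix_refl _

lemma g_inv (m : ℕ) : (∀ x ∈ g m, x = 1 ∨ x = 2) ∧ m + 3 ≤ (g m).length := by
  induction m with
  | zero =>
    constructor
    · intro x hx
      simp [g] at hx
      omega
    · simp [g]
  | succ k ih =>
    obtain ⟨helem, hlen⟩ := ih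
    have hlt : k + 2 < (g k).length := by omega
    have hc : (g k).getD (k + 2) 0 = (g k)[k + 2] := List.getD_eq_getElem _ _ hlt
    have hc12 : (g k)[k + 2] = 1 ∨ (g k)[k + 2] = 2 := helem _ (List.getElem_mem hlt)
    constructor
    · intro x hx
      have hx' : x ∈ g k ++ List.replicate ((g k).getD (k + 2) 0) (1 + (k + 2) % 2) := hx
      rcases List.mem_append.mp hx' with h | h
      · exact helem x h
      · have := List.eq_of_mem_replicate h
        omega
    · show k + 1 + 3 ≤ (g k ++ List.replicate ((g k).getD (k + 2) 0) (1 + (k + 2) % 2)).length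
      rw [List.length_append, List.length_replicate]
      omega

lemma lt_glen (n : ℕ) : n < (g n).length := by
  have := (g_inv n).2; omega

lemma getD_eq_kk {m n : ℕ} (h : n < (g m).length) : (g m).getD n 0 = kk n := by
  have hn : n < (g n).length := lt_glen n
  show (g m).getD n 0 = (g n).getD n 0
  rw [List.getD_eq_getElem _ _ h, List.getD_eq_getElem _ _ hn]
  rcases le_total m n with hmn | hmn
  · exact (g_prefix_le hmn).getElem h
  · exact ((g_prefix_le hmn).getElem hn).symm

lemma kk_mem (n : ℕ) : kk n = 1 ∨ kk n = 2 := by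
  have hn : n < (g n).length := lt_glen n
  have h : kk n = (g n)[n] := List.getD_eq_getElem _ _ hn
  rw [h]
  exact (g_inv n).1 _ (List.getElem_mem hn)

lemma kk_pos (n : ℕ) : 1 ≤ kk n := by
  rcases kk_mem n with h | h <;> omega

lemma kk0 : kk 0 = 1 := by decide
lemma kk1 : kk 1 = 2 := by decide
lemma kk2 : kk 2 = 2 := by decide

lemma psum_kk_two : psum kk 2 = 3 := by
  rw [psum_succ, psum_succ, psum_zero, kk0, kk1]

lemma glen (m : ℕ) : (g m).length = psum kk (m + 2) := by
  induction m with
  | zero =>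
    rw [psum_kk_two]
    rfl
  | succ k ih =>
    have hlen := (g_inv k).2
    have hgd : (g k).getD (k + 2) 0 = kk (k + 2) := getD_eq_kk (by omega)
    show (g k ++ List.replicate ((g k).getD (k + 2) 0) (1 + (k + 2) % 2)).length = _
    rw [List.length_append, List.length_replicate, ih, hgd]
    exact (psum_succ kk (k + 2)).symm

lemma kk_block : ∀ j i : ℕ, psum kk j ≤ i → i < psum kk (j + 1) → kk i = 1 + j % 2
  | 0, i, h1, h2 => by
    have hp : psum kk 1 = 1 := by rw [psum_succ, psum_zero, kk0]
    rw [hp] at h2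
    have : i = 0 := by omega
    rw [this, kk0]
  | 1, i, h1, h2 => by
    have hp : psum kk 1 = 1 := by rw [psum_succ, psum_zero, kk0]
    rw [hp] at h1
    rw [psum_kk_two] at h2
    have : i = 1 ∨ i = 2 := by omega
    rcases this with h | h <;> rw [h]
    · rw [kk1]
    · rw [kk2]
  | (m + 2), i, h1, h2 => by
    have h1' : (g m).length ≤ i := by rw [glen]; exact h1
    have h2' : i < (g (m + 1)).length := by rw [glen]; exact h2
    have hkk : kk i = (g (m + 1)).getD i 0 := (getD_eq_kk h2').symm
    rw [hkk]
    show (g m ++ List.replicate ((g m).getD (m + 2) 0) (1 + (m + 2) % 2)).getD i 0 = _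
    rw [List.getD_append_right _ _ _ _ h1']
    have hL : (g (m + 1)).length
        = (g m).length + ((g m).getD (m + 2) 0) := by
      show (g m ++ List.replicate ((g m).getD (m + 2) 0) (1 + (m + 2) % 2)).length = _
      rw [List.length_append, List.length_replicate]
    have hlt : i - (g m).length < (g m).getD (m + 2) 0 := by omega
    rw [List.getD_eq_getElem _ _ (by simpa using hlt), List.getElem_replicate]

lemma kk_isKolakoski : IsKolakoski kk := by
  refine ⟨kk_mem, kk0, ?_⟩
  intro m
  have hlt : psum kk m < psum kk (m + 1) := by
    rw [psum_succ]; have := kk_pos m; omega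
  have hlt2 : psum kk (m + 1) < psum kk (m + 2) := by
    rw [psum_succ kk (m + 1)]; have := kk_pos (m + 1); omega
  have hs : kk (psum kk m) = 1 + m % 2 := kk_block m _ le_rfl hlt
  have hs2 : kk (psum kk (m + 1)) = 1 + (m + 1) % 2 := kk_block (m + 1) _ le_rfl hlt2
  refine ⟨fun i h1 h2 => ?_, ?_⟩
  · rw [kk_block m i h1 h2, hs]
  · rw [hs, hs2]; omega

section General

variable {K : ℕ → ℕ}

lemma K_one (hK : IsKolakoski K) : K 1 = 2 := by
  obtain ⟨hr, h0, hrs⟩ := hK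
  have hne := (hrs 0).2
  have h1 : psum K 1 = 1 := by rw [psum_succ, psum_zero, h0]
  rw [psum_zero, h1, h0] at hne
  rcases hr 1 with h | h <;> omega

lemma start_val (hK : IsKolakoski K) (m : ℕ) : K (psum K m) = 1 + m % 2 := by
  induction m with
  | zero => rw [psum_zero, hK.2.1]
  | succ k ih =>
    have hne := (hK.2.2 k).2
    rcases hK.1 (psum K (k + 1)) with h | h <;> omega

lemma block_val (hK : IsKolakoski K) {m i : ℕ} (h1 : psum K m ≤ i)
    (h2 : i < psum K (m + 1)) : K i = 1 + m % 2 := by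
  rw [(hK.2.2 m).1 i h1 h2, start_val hK]

lemma psum_ge (hK : IsKolakoski K) (m : ℕ) : m ≤ psum K m := by
  induction m with
  | zero => exact Nat.zero_le _
  | succ k ih =>
    rw [psum_succ]
    have : 1 ≤ K k := by rcases hK.1 k with h | h <;> omega
    omega

lemma psum_lb (hK : IsKolakoski K) {m : ℕ} (hm : 2 ≤ m) : m + 1 ≤ psum K m := by
  induction m, hm using Nat.le_induction with
  | base =>
    rw [psum_succ, psum_succ, psum_zero, hK.2.1, K_one hK]
  | succ k hk ih =>
    rw [psum_succ]
    have : 1 ≤ K k := by rcases hK.1 k with h | h <;> omega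
    omega

lemma exists_block (hK : IsKolakoski K) (n : ℕ) :
    ∃ m, psum K m ≤ n ∧ n < psum K (m + 1) := by
  classical
  have hub : ∃ j, n < psum K j := ⟨n + 1, by have := psum_ge hK (n + 1); omega⟩
  have hj : n < psum K (Nat.find hub) := Nat.find_spec hub
  have hj0 : Nat.find hub ≠ 0 := by
    intro h
    rw [h, psum_zero] at hj
    omega
  obtain ⟨m, hm⟩ := Nat.exists_eq_succ_of_ne_zero hj0
  refine ⟨m, ?_, by rw [show m + 1 = m.succ from rfl, ← hm]; exact hj⟩
  have := Nat.find_min hub (m := m) (by omega)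
  omega

end General

end Kola

/-- There exists exactly one sequence over `{1,2}` starting
with `1` which equals the sequence of its own run lengths. -/
theorem kolakoski_exists_unique : ∃! K : ℕ → ℕ, IsKolakoski K := by
  refine ⟨Kola.kk, Kola.kk_isKolakoski, ?_⟩
  intro K hK
  funext n
  induction n using Nat.strong_induction_on with
  | _ n ih =>
    match n, ih with
    | 0, _ => rw [hK.2.1, Kola.kk0]
    | 1, _ => rw [Kola.K_one hK, Kola.kk1]
    | (n + 2), ih =>
      obtain ⟨m, h1, h2⟩ := Kola.exists_block hK (n + 2)
      have hm : m < n + 2 := by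
        rcases Nat.lt_or_ge m 2 with h | h
        · omega
        · have := Kola.psum_lb hK h
          omega
      have hps : ∀ j ≤ n + 2, psum K j = psum Kola.kk j := by
        intro j hj
        refine Finset.sum_congr rfl fun i hi => ?_
        have hi' : i < j := Finset.mem_range.mp hi
        exact ih i (by omega)
      have h1' : psum Kola.kk m ≤ n + 2 := by rw [← hps m (by omega)]; exact h1
      have h2' : n + 2 < psum Kola.kk (m + 1) := by rw [← hps (m + 1) (by omega)]; exact h2
      rw [Kola.block_val hK h1 h2, Kola.block_val Kola.kk_isKolakoski h1' h2']
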